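/- Let p be an odd prime and n = p^a. Then every subset E of ℤ/nℤ is determined up to translation by its 3-deck: if F ⊆ ℤ/nℤ has the same 3-deck as E, then F = E + a for some a ∈ ℤ/nℤ. -/

import Mathlib

/-!
Write `Ê(k) = ∑_{j ∈ E} e(-jk)`. Summing the 3-deck against characters gives the triple
products `Ê(k₁ + k₂) Ê(-k₁) Ê(-k₂)`; with `k₂ = 0` they give `|Ê|`, so `F̂` vanishes exactly
where `Ê` does, and `χ = F̂ / Ê` is multiplicative on the support `S` of `Ê` wherever this makes
sense. As `Ê(k)` is a rational polynomial evaluated at a root of unity, `S` is stable under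
units, so for `n = p ^ a` there is `m` with `{t p ^ m : p ∤ t} ⊆ S ⊆ p ^ m ℤ/nℤ`. For odd `p`,
every `t p ^ m` with `p ∤ t` is reached from `p ^ m` by adding `p ^ m` or `2 p ^ m` while staying
prime to `p`, so `χ(t p ^ m) = χ(p ^ m) ^ t`. Hence `χ = e(c ·)` on `S`, `F̂ = e(c ·) Ê`, and
`F = E + c` by Fourier inversion.
-/

/-- The 3-deck of `E ⊆ ℤ/nℤ`: `N_E(j₁,j₂) = #{j : j ∈ E, j+j₁ ∈ E, j+j₂ ∈ E}`. -/
def deck3 {n : ℕ} [NeZero n] (E : Finset (ZMod n)) (j₁ j₂ : ZMod n) : ℕ :=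
  (Finset.univ.filter (fun j : ZMod n => j ∈ E ∧ j + j₁ ∈ E ∧ j + j₂ ∈ E)).card

open Complex Finset ZMod
open scoped ComplexConjugate Real

section Cyclotomic

open Polynomial

variable {K : Type*} [Field K] [CharZero K]

theorem aeval_eq_zero_iff_of_isPrimitiveRoot {d : ℕ} (hd : 0 < d) {x y : K}
    (hx : IsPrimitiveRoot x d) (hy : IsPrimitiveRoot y d) (P : ℚ[X]) :
    aeval x P = 0 ↔ aeval y P = 0 := by
  rw [← minpoly.dvd_iff, ← minpoly.dvd_iff, ← cyclotomic_eq_minpoly_rat hx hd,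
    ← cyclotomic_eq_minpoly_rat hy hd]

theorem aeval_pow_eq_zero_iff_of_coprime {n u : ℕ} (hn : 0 < n) {x : K} (hx : x ^ n = 1)
    (hu : u.Coprime n) (P : ℚ[X]) : aeval (x ^ u) P = 0 ↔ aeval x P = 0 := by
  have hx' := IsPrimitiveRoot.orderOf x
  exact aeval_eq_zero_iff_of_isPrimitiveRoot
    (isOfFinOrder_iff_pow_eq_one.2 ⟨n, hn, hx⟩).orderOf_pos
    (hx'.pow_of_coprime u (hu.coprime_dvd_right (orderOf_dvd_of_pow_eq_one hx))) hx' P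

end Cyclotomic

namespace Nat

variable {p : ℕ}

theorem not_dvd_one_add_pow (hp2 : ¬ p ∣ 2) (b : ℕ) : ¬ p ∣ 1 + p ^ b := by
  rcases b.eq_zero_or_pos with rfl | hb
  · exact hp2
  · rw [Nat.dvd_add_left (dvd_pow_self p hb.ne')]
    exact fun h ↦ hp2 (h.trans (one_dvd 2))

variable {M : Type*} {S : Set ℕ} {v : ℕ → M}

theorem eq_pow_of_map_add_of_not_dvd [CommMonoid M] (hp2 : ¬ p ∣ 2) (hS : ∀ t, ¬ p ∣ t → t ∈ S)
    (hv : ∀ s t, s ∈ S → t ∈ S → s + t ∈ S → v (s + t) = v s * v t) :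
    ∀ t, ¬ p ∣ t → v t = v 1 ^ t := by
  have h1 : ¬ p ∣ 1 := fun h ↦ hp2 (h.trans (one_dvd 2))
  have hv2 : v 2 = v 1 ^ 2 := by rw [sq, ← hv 1 1 (hS 1 h1) (hS 1 h1) (hS 2 hp2)]
  intro t
  induction t using Nat.strong_induction_on with
  | _ t ih =>
  intro ht
  have step : ∀ s r, t = s + r → 0 < r → ¬ p ∣ s → ¬ p ∣ r → v r = v 1 ^ r →
      v t = v 1 ^ t := by
    rintro s r rfl hr hs hpr hvr
    rw [hv s r (hS s hs) (hS r hpr) (hS _ ht), ih s (by omega) hs, hvr, pow_add]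
  have ht0 : t ≠ 0 := by rintro rfl; exact ht (dvd_zero p)
  obtain rfl | rfl | ht3 : t = 1 ∨ t = 2 ∨ 3 ≤ t := by omega
  · exact (pow_one _).symm
  · exact hv2
  -- `p` cannot divide both `t - 1` and `t - 2`
  by_cases hpt : p ∣ t - 1
  · refine step (t - 2) 2 (by omega) two_pos (fun h ↦ h1 ?_) hp2 hv2
    simpa [show t - 1 - (t - 2) = 1 by omega] using Nat.dvd_sub hpt h
  · exact step (t - 1) 1 (by omega) one_pos hpt h1 (pow_one _).symm

theorem eq_pow_of_map_add [CommMonoidWithZero M] [IsCancelMulZero M] (hp2 : ¬ p ∣ 2)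
    (hS : ∀ t, ¬ p ∣ t → t ∈ S)
    (hv : ∀ s t, s ∈ S → t ∈ S → s + t ∈ S → v (s + t) = v s * v t) (hv1 : v 1 ≠ 0)
    {t : ℕ} (ht : t ∈ S) : v t = v 1 ^ t := by
  have hpow := eq_pow_of_map_add_of_not_dvd hp2 hS hv
  by_cases hpt : p ∣ t
  · have ht1 : ¬ p ∣ t + 1 := fun h ↦ hp2 (((Nat.dvd_add_right hpt).1 h).trans (one_dvd 2))
    have := hv t 1 ht (hS 1 fun h ↦ hp2 (h.trans (one_dvd 2))) (hS _ ht1)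
    rw [hpow _ ht1, pow_succ] at this
    exact (mul_right_cancel₀ hv1 this).symm
  · exact hpow t hpt

end Nat

section TripleProduct

variable {G : Type*} [AddCommGroup G] {f g : G → ℂ}

theorem mul_neg_eq_of_triple
    (htriple : ∀ k₁ k₂, g (k₁ + k₂) * g (-k₁) * g (-k₂) =
      f (k₁ + k₂) * f (-k₁) * f (-k₂))
    (h0 : g 0 = f 0) (hf0 : f 0 ≠ 0) (k : G) : g k * g (-k) = f k * f (-k) := by
  have := htriple k 0
  rw [add_zero, neg_zero, h0] at this
  exact mul_right_cancel₀ hf0 this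

theorem eq_zero_iff_of_triple (hf : ∀ k, f (-k) = conj (f k)) (hg : ∀ k, g (-k) = conj (g k))
    (htriple : ∀ k₁ k₂, g (k₁ + k₂) * g (-k₁) * g (-k₂) =
      f (k₁ + k₂) * f (-k₁) * f (-k₂))
    (h0 : g 0 = f 0) (hf0 : f 0 ≠ 0) (k : G) : g k = 0 ↔ f k = 0 := by
  have := mul_neg_eq_of_triple htriple h0 hf0 k
  rw [hf, hg, mul_conj, mul_conj, ofReal_inj] at this
  rw [← normSq_eq_zero, ← normSq_eq_zero, this]

theorem mul_eq_mul_of_triple (hf : ∀ k, f (-k) = conj (f k))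
    (htriple : ∀ k₁ k₂, g (k₁ + k₂) * g (-k₁) * g (-k₂) =
      f (k₁ + k₂) * f (-k₁) * f (-k₂))
    (h0 : g 0 = f 0) (hf0 : f 0 ≠ 0) {k₁ k₂ : G} (h₁ : f k₁ ≠ 0) (h₂ : f k₂ ≠ 0) :
    g (k₁ + k₂) * f k₁ * f k₂ = f (k₁ + k₂) * g k₁ * g k₂ := by
  have hneg : ∀ {k}, f k ≠ 0 → f (-k) ≠ 0 := fun hk ↦ by rwa [hf, _root_.map_ne_zero]
  have e₁ := mul_neg_eq_of_triple htriple h0 hf0 k₁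
  have e₂ := mul_neg_eq_of_triple htriple h0 hf0 k₂
  refine mul_right_cancel₀ (mul_ne_zero (hneg h₁) (hneg h₂)) ?_
  linear_combination (-g (k₁ + k₂) * g k₂ * g (-k₂)) * e₁ +
    (-g (k₁ + k₂) * f k₁ * f (-k₁)) * e₂ + g k₁ * g k₂ * htriple k₁ k₂

end TripleProduct

namespace ZMod

section

variable {n : ℕ} [NeZero n]

theorem stdAddChar_pow_eq_one (x : ZMod n) : stdAddChar x ^ n = 1 := by
  rw [← AddChar.map_nsmul_eq_pow, nsmul_eq_mul, natCast_self, zero_mul,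
    AddChar.map_zero_eq_one]

theorem isPrimitiveRoot_stdAddChar_natCast {d e : ℕ} (h : n = d * e) :
    IsPrimitiveRoot (stdAddChar (d : ZMod n)) e := by
  have h1 : stdAddChar (1 : ZMod n) = exp (2 * π * I / n) := by
    simpa using stdAddChar_coe (N := n) 1
  rw [← nsmul_one, AddChar.map_nsmul_eq_pow, h1]
  exact (isPrimitiveRoot_exp n (NeZero.ne n)).pow (NeZero.pos n) h

theorem dft_add_mul_dft_neg_mul_dft_neg (Φ : ZMod n → ℂ) (k₁ k₂ : ZMod n) :
    𝓕 Φ (k₁ + k₂) * 𝓕 Φ (-k₁) * 𝓕 Φ (-k₂) =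
      ∑ j₁, ∑ j₂, (∑ j, Φ j * Φ (j + j₁) * Φ (j + j₂)) * stdAddChar (j₁ * k₁ + j₂ * k₂) := by
  symm
  calc _ = ∑ j, ∑ j₁, ∑ j₂,
          Φ j * Φ (j + j₁) * Φ (j + j₂) * stdAddChar (j₁ * k₁ + j₂ * k₂) := by
        simp only [sum_mul]
        exact (sum_congr rfl fun _ _ ↦ sum_comm).trans sum_comm
    _ = ∑ j, ∑ m₁, ∑ m₂,
          Φ j * Φ m₁ * Φ m₂ * stdAddChar ((m₁ - j) * k₁ + (m₂ - j) * k₂) := by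
        refine sum_congr rfl fun j _ ↦ Fintype.sum_equiv (Equiv.addLeft j) _ _ fun j₁ ↦ ?_
        refine Fintype.sum_equiv (Equiv.addLeft j) _ _ fun j₂ ↦ ?_
        simp
    _ = _ := by
        simp only [dft_apply, smul_eq_mul]
        rw [sum_mul_sum, sum_mul_sum]
        refine sum_congr rfl fun j _ ↦ ?_
        simp only [sum_mul]
        rw [sum_comm]
        refine sum_congr rfl fun m₂ _ ↦ sum_congr rfl fun m₁ _ ↦ ?_
        rw [show (m₁ - j) * k₁ + (m₂ - j) * k₂ = -(j * (k₁ + k₂)) + -(m₁ * -k₁) + -(m₂ * -k₂)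
          by ring, AddChar.map_add_eq_mul, AddChar.map_add_eq_mul]
        ring

noncomputable def finsetDFT (E : Finset (ZMod n)) : ZMod n → ℂ :=
  𝓕 ((E : Set (ZMod n)).indicator 1)

theorem finsetDFT_apply (E : Finset (ZMod n)) (k : ZMod n) :
    finsetDFT E k = ∑ j ∈ E, stdAddChar (-(j * k)) := by
  simp [finsetDFT, dft_apply, Set.indicator_apply, Finset.sum_ite_mem]

theorem finsetDFT_zero (E : Finset (ZMod n)) : finsetDFT E 0 = #E := by
  simp [finsetDFT_apply]

theorem finsetDFT_neg (E : Finset (ZMod n)) (k : ZMod n) :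
    finsetDFT E (-k) = conj (finsetDFT E k) := by
  simp [finsetDFT_apply, map_sum, ← AddChar.map_neg_eq_conj]

theorem finsetDFT_image_add (E : Finset (ZMod n)) (c k : ZMod n) :
    finsetDFT (E.image (· + c)) k = stdAddChar (-(c * k)) * finsetDFT E k := by
  rw [finsetDFT_apply, finsetDFT_apply, sum_image fun _ _ _ _ ↦ add_right_cancel, mul_sum]
  refine sum_congr rfl fun j _ ↦ ?_
  rw [← AddChar.map_add_eq_mul]
  ring_nf

theorem finsetDFT_injective : Function.Injective (finsetDFT (n := n)) := fun _ _ h ↦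
  coe_injective (Set.indicator_one_inj ℂ (dft.injective h))

open Polynomial in
theorem finsetDFT_eq_aeval (E : Finset (ZMod n)) (k : ZMod n) :
    finsetDFT E k = aeval (stdAddChar (-k)) (∑ j ∈ E, X ^ j.val : ℚ[X]) := by
  simp only [finsetDFT_apply, map_sum, map_pow, aeval_X, ← AddChar.map_nsmul_eq_pow,
    nsmul_eq_mul, natCast_zmod_val, mul_neg]

theorem finsetDFT_natCast_mul_eq_zero_iff (E : Finset (ZMod n)) {u : ℕ} (hu : u.Coprime n)
    (k : ZMod n) : finsetDFT E (u * k) = 0 ↔ finsetDFT E k = 0 := by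
  rw [finsetDFT_eq_aeval, finsetDFT_eq_aeval, ← mul_neg, ← nsmul_eq_mul,
    AddChar.map_nsmul_eq_pow]
  exact aeval_pow_eq_zero_iff_of_coprime (NeZero.pos n) (stdAddChar_pow_eq_one _) hu _

theorem natCast_deck3 (E : Finset (ZMod n)) (j₁ j₂ : ZMod n) :
    (deck3 E j₁ j₂ : ℂ) = ∑ j, (E : Set (ZMod n)).indicator 1 j *
      (E : Set (ZMod n)).indicator 1 (j + j₁) * (E : Set (ZMod n)).indicator 1 (j + j₂) := by
  simp only [deck3, card_filter, Set.indicator_apply, mem_coe, Pi.one_apply]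
  push_cast
  refine sum_congr rfl fun j _ ↦ ?_
  split_ifs <;> simp_all

theorem card_eq_deck3_zero_zero (E : Finset (ZMod n)) : #E = deck3 E 0 0 := by
  simp [deck3]

theorem finsetDFT_triple_eq_of_deck3_eq {E F : Finset (ZMod n)}
    (h : ∀ j₁ j₂, deck3 E j₁ j₂ = deck3 F j₁ j₂) (k₁ k₂ : ZMod n) :
    finsetDFT F (k₁ + k₂) * finsetDFT F (-k₁) * finsetDFT F (-k₂) =
      finsetDFT E (k₁ + k₂) * finsetDFT E (-k₁) * finsetDFT E (-k₂) := by
  simp only [finsetDFT, dft_add_mul_dft_neg_mul_dft_neg, ← natCast_deck3, h]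

end

variable {p a : ℕ} [NeZero (p ^ a)] {S : Set (ZMod (p ^ a))}

theorem exists_pow_mem_of_unit_mul_invariant (hp : p.Prime)
    (hS : ∀ u : ℕ, ¬ p ∣ u → ∀ k, (u : ZMod (p ^ a)) * k ∈ S ↔ k ∈ S) (h0 : 0 ∈ S) :
    ∃ m ≤ a, (∀ t : ℕ, ¬ p ∣ t → (t : ZMod (p ^ a)) * (p : ZMod (p ^ a)) ^ m ∈ S) ∧
      ∀ k ∈ S, ∃ t : ℕ, k = (t : ZMod (p ^ a)) * (p : ZMod (p ^ a)) ^ m := by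
  classical
  have hpa : (p : ZMod (p ^ a)) ^ a = 0 := by rw [← Nat.cast_pow, natCast_self]
  have hex : ∃ m, (p : ZMod (p ^ a)) ^ m ∈ S := ⟨a, hpa ▸ h0⟩
  refine ⟨Nat.find hex, Nat.find_min' hex (hpa ▸ h0),
    fun t ht ↦ (hS t ht _).2 (Nat.find_spec hex), fun k hk ↦ ?_⟩
  rcases eq_or_ne k 0 with rfl | hk0
  · exact ⟨0, by simp⟩
  obtain ⟨e, t, ht, hkt⟩ :=
    Nat.exists_eq_pow_mul_and_not_dvd ((val_ne_zero k).2 hk0) p hp.ne_one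
  have hk' : k = t * (p : ZMod (p ^ a)) ^ e := by
    rw [← natCast_zmod_val k, hkt]; push_cast; ring
  have hme : Nat.find hex ≤ e := Nat.find_min' hex ((hS t ht _).1 (hk' ▸ hk))
  exact ⟨t * p ^ (e - Nat.find hex), by
    rw [hk', Nat.cast_mul, Nat.cast_pow, mul_assoc, ← pow_add, Nat.sub_add_cancel hme]⟩

theorem exists_eq_stdAddChar_of_map_add (hp : p.Prime) (hp2 : p ≠ 2)
    (hS : ∀ u : ℕ, ¬ p ∣ u → ∀ k, (u : ZMod (p ^ a)) * k ∈ S ↔ k ∈ S)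
    (h0 : 0 ∈ S) {χ : ZMod (p ^ a) → ℂ} (hχ : ∀ k ∈ S, χ k ≠ 0)
    (hadd : ∀ k₁ ∈ S, ∀ k₂ ∈ S, k₁ + k₂ ∈ S → χ (k₁ + k₂) = χ k₁ * χ k₂) :
    ∃ c : ZMod (p ^ a), ∀ k ∈ S, χ k = stdAddChar (c * k) := by
  have hp2' : ¬ p ∣ 2 := fun h ↦ hp2 ((Nat.prime_dvd_prime_iff_eq hp Nat.prime_two).1 h)
  obtain ⟨m, hma, hunits, hmul⟩ := exists_pow_mem_of_unit_mul_invariant hp hS h0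
  set k₀ := (p : ZMod (p ^ a)) ^ m
  have hk₀ : k₀ ∈ S := by simpa using hunits 1 hp.not_dvd_one
  have hpow : ∀ t : ℕ, (t : ZMod (p ^ a)) * k₀ ∈ S → χ (t * k₀) = χ k₀ ^ t := fun t ht ↦ by
    simpa using Nat.eq_pow_of_map_add hp2' (S := {t | (t : ZMod (p ^ a)) * k₀ ∈ S})
      (v := fun t ↦ χ (t * k₀)) hunits
      (fun s t hs ht hst ↦ by
        simpa only [Nat.cast_add, add_mul] using hadd _ hs _ ht (by simpa [add_mul] using hst))
      (by simpa using hχ _ hk₀) ht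
  -- `1 + p ^ (a - m)` is prime to `p` and acts on `k₀` as `1`
  have hroot : χ k₀ ^ p ^ (a - m) = 1 := by
    have hk₀' : ((1 + p ^ (a - m) : ℕ) : ZMod (p ^ a)) * k₀ = k₀ := by
      rw [Nat.cast_add, add_mul, Nat.cast_one, one_mul, Nat.cast_pow, ← pow_add,
        Nat.sub_add_cancel hma, ← Nat.cast_pow, natCast_self, add_zero]
    have := hpow _ (hunits _ (Nat.not_dvd_one_add_pow hp2' (a - m)))
    rw [hk₀', pow_add, pow_one] at this
    exact (mul_right_eq_self₀.1 this.symm).resolve_right (hχ _ hk₀)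
  have : NeZero p := ⟨hp.ne_zero⟩
  obtain ⟨s, -, hs⟩ := (isPrimitiveRoot_stdAddChar_natCast (d := p ^ m) (e := p ^ (a - m))
    (by rw [← pow_add, Nat.add_sub_cancel' hma])).eq_pow_of_pow_eq_one hroot
  refine ⟨s, fun k hk ↦ ?_⟩
  obtain ⟨t, rfl⟩ := hmul k hk
  rw [hpow t hk, ← hs, ← pow_mul, ← AddChar.map_nsmul_eq_pow, nsmul_eq_mul]
  push_cast [k₀]
  ring_nf

end ZMod

/-- for `p` an odd prime and `n = p^a`, every subset of `ℤ/nℤ` is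
determined up to translation by its 3-deck. -/
theorem zmod_prime_power_3deck (p a n : ℕ) (hp : p.Prime) (hodd : p ≠ 2)
    (hn : n = p ^ a) [NeZero n] (E F : Finset (ZMod n))
    (h : ∀ j₁ j₂ : ZMod n, deck3 E j₁ j₂ = deck3 F j₁ j₂) :
    ∃ c : ZMod n, F = E.image (· + c) := by
  subst hn
  have hcard : #F = #E := by rw [card_eq_deck3_zero_zero, card_eq_deck3_zero_zero E, h]
  rcases E.eq_empty_or_nonempty with rfl | hE
  · exact ⟨0, by simpa using hcard⟩
  have hE0 : finsetDFT E 0 ≠ 0 := by simpa [finsetDFT_zero] using hE.ne_empty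
  have h0 : finsetDFT F 0 = finsetDFT E 0 := by simp only [finsetDFT_zero, hcard]
  have htriple := finsetDFT_triple_eq_of_deck3_eq h
  have hzero := eq_zero_iff_of_triple (finsetDFT_neg E) (finsetDFT_neg F) htriple h0 hE0
  obtain ⟨c, hc⟩ := exists_eq_stdAddChar_of_map_add hp hodd (S := {k | finsetDFT E k ≠ 0})
    (χ := fun k ↦ finsetDFT F k / finsetDFT E k)
    (fun u hu ↦ (finsetDFT_natCast_mul_eq_zero_iff E
      (Nat.Coprime.pow_right a (hp.coprime_iff_not_dvd.2 hu).symm) · |>.not)) hE0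
    (fun k hk ↦ div_ne_zero ((hzero k).not.2 hk) hk)
    (fun k₁ h₁ k₂ h₂ h₁₂ ↦ by
      rw [div_mul_div_comm, div_eq_div_iff h₁₂ (mul_ne_zero h₁ h₂)]
      linear_combination mul_eq_mul_of_triple (finsetDFT_neg E) htriple h0 hE0 h₁ h₂)
  refine ⟨-c, finsetDFT_injective (funext fun k ↦ ?_)⟩
  rw [finsetDFT_image_add, neg_mul, neg_neg]
  by_cases hk : finsetDFT E k = 0
  · rw [(hzero k).2 hk, hk, mul_zero]
  · rw [← hc k hk, div_mul_cancel₀ _ hk]
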